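/- arXiv:2412.02489 — 2 statements merged into one kernel-verified Lean document; each statement's English description precedes it below -/
import Mathlib

section
/- Let ψ₁,…,ψₘ : Ω → ℂ be orthonormal with respect to a probability measure μ on Ω and ψ(x) = (ψ₁(x),…,ψₘ(x))ᵀ. Then for every ε > 0 there exist M ∈ ℕ and points x₁,…,x_M ∈ Ω such that det((1/M) ∑_{i=1}^M ψ(x_i)·ψ(x_i)*) ≥ 1 − ε. -/
/-!
Sample `x₁, …, x_M` independently from `μ`. Expanding `det (∑ᵢ ψ(xᵢ) ψ(xᵢ)*)` multilinearly in
its rows gives a sum over maps `r : {1, …, m} → {1, …, M}` of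
`∏ₖ ψₖ(x_{r k}) · det (conj ψₗ(x_{r k}))ₖₗ`. The terms with `r` not injective have two equal rows
and vanish. For injective `r` the points `x_{r k}` are independent with law `μ`, so expanding the
determinant by Leibniz and using orthonormality, only the identity permutation survives and the
term has mean `1`. Hence the mean of `det ((1/M) ∑ᵢ ψ(xᵢ) ψ(xᵢ)*)` is
`M (M - 1) ⋯ (M - m + 1) / M^m`, which tends to `1`, and some sample is at least the mean.
-/

open MeasureTheory Matrix ProbabilityTheory

theorem Matrix.det_sum_vecMulVec {R n ι : Type*} [CommRing R] [Fintype n] [DecidableEq n]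
    [Fintype ι] (a b : ι → n → R) :
    (∑ i, vecMulVec (a i) (b i)).det =
      ∑ r : n → ι, (∏ k, a (r k) k) * (of fun k ↦ b (r k)).det := by
  have hrows : ∑ i, vecMulVec (a i) (b i) = fun k ↦ ∑ i, a i k • b i := by
    ext k l
    simp [vecMulVec_apply, sum_apply]
  rw [hrows]
  exact ((detRowAlternating : (n → R) [⋀^n]→ₗ[R] R).toMultilinearMap.map_sum _).trans
    (Finset.sum_congr rfl fun r _ ↦ MultilinearMap.map_smul_univ _ _ _)

theorem measurePreserving_pi_comp_injective {ι κ Ω : Type*} [Fintype ι] [Fintype κ]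
    [MeasurableSpace Ω] (μ : Measure Ω) [IsProbabilityMeasure μ] {r : ι → κ}
    (hr : Function.Injective r) :
    MeasurePreserving (fun x i ↦ x (r i)) (Measure.pi fun _ : κ ↦ μ) (Measure.pi fun _ ↦ μ) where
  measurable := measurable_pi_lambda _ fun i ↦ measurable_pi_apply (r i)
  map_eq := by
    have hindep := (iIndepFun_pi (μ := fun _ : κ ↦ μ) (X := fun _ ↦ id)
      fun _ ↦ aemeasurable_id).precomp hr
    rw [hindep.map_fun_eq_pi_map fun i ↦ (measurable_pi_apply (r i)).aemeasurable]
    simp only [(measurePreserving_eval (fun _ : κ ↦ μ) _).map_eq]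

theorem tendsto_descFactorial_div_pow_atTop (k : ℕ) :
    Filter.Tendsto (fun n : ℕ ↦ (n.descFactorial k : ℝ) / (n : ℝ) ^ k) Filter.atTop (nhds 1) := by
  refine (Asymptotics.isEquivalent_iff_tendsto_one ?_).1 (isEquivalent_descFactorial k)
  filter_upwards [Filter.eventually_gt_atTop 0] with n hn
  positivity

theorem memLp_two_of_integral_mul_star_ne_zero {𝕜 Ω : Type*} [RCLike 𝕜] [MeasurableSpace Ω]
    {μ : Measure Ω} {f : Ω → 𝕜} (hf : AEStronglyMeasurable f μ)
    (h : ∫ x, f x * star (f x) ∂μ ≠ 0) : MemLp f 2 μ := by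
  refine (memLp_two_iff_integrable_sq_norm hf).2 ?_
  simpa [norm_mul, sq] using (Integrable.of_integral_ne_zero h).norm

section Determinant

variable {𝕜 Ω n : Type*} [RCLike 𝕜] [Fintype n] [DecidableEq n]

noncomputable def prodMulDetStar (ψ : n → Ω → 𝕜) (y : n → Ω) : 𝕜 :=
  (∏ k, ψ k (y k)) * (of fun k l ↦ star (ψ l (y k))).det

theorem prodMulDetStar_eq_sum_perm (ψ : n → Ω → 𝕜) (y : n → Ω) :
    prodMulDetStar ψ y =
      ∑ σ : Equiv.Perm n, (Equiv.Perm.sign σ : 𝕜) * ∏ k, ψ k (y k) * star (ψ (σ k) (y k)) := by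
  rw [prodMulDetStar, ← det_transpose, det_apply', Finset.mul_sum]
  refine Finset.sum_congr rfl fun σ _ ↦ ?_
  simp only [Finset.prod_mul_distrib, transpose_apply, of_apply]
  ring

theorem prodMulDetStar_comp_eq_zero {ι : Type*} (ψ : n → Ω → 𝕜) {r : n → ι}
    (hr : ¬ Function.Injective r) (x : ι → Ω) : prodMulDetStar ψ (fun k ↦ x (r k)) = 0 := by
  obtain ⟨k, l, hkl, hne⟩ : ∃ k l, r k = r l ∧ k ≠ l := by
    simpa [Function.Injective] using hr
  rw [prodMulDetStar, det_zero_of_row_eq hne (by ext; simp [hkl]), mul_zero]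

theorem det_sum_vecMulVec_star {ι : Type*} [Fintype ι] (ψ : n → Ω → 𝕜) (x : ι → Ω) :
    (∑ i, vecMulVec (fun k ↦ ψ k (x i)) (fun l ↦ star (ψ l (x i)))).det =
      ∑ r : n → ι, prodMulDetStar ψ fun k ↦ x (r k) :=
  det_sum_vecMulVec _ _

end Determinant

section Orthonormal

variable {𝕜 Ω n : Type*} [RCLike 𝕜] [MeasurableSpace Ω] {μ : Measure Ω} [DecidableEq n]
  {ψ : n → Ω → 𝕜}

def IsOrthonormalSystem (μ : Measure Ω) (ψ : n → Ω → 𝕜) : Prop :=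
  ∀ k l, ∫ x, ψ k x * star (ψ l x) ∂μ = if k = l then 1 else 0

theorem IsOrthonormalSystem.integrable_mul_star (horth : IsOrthonormalSystem μ ψ)
    (hψ : ∀ k, AEStronglyMeasurable (ψ k) μ) (k l : n) :
    Integrable (fun x ↦ ψ k x * star (ψ l x)) μ := by
  have hL2 : ∀ k, MemLp (ψ k) 2 μ := fun k ↦
    memLp_two_of_integral_mul_star_ne_zero (hψ k) (by rw [horth, if_pos rfl]; exact one_ne_zero)
  exact (hL2 k).integrable_mul (hL2 l).star

variable [Fintype n]

theorem IsOrthonormalSystem.integrable_prodMulDetStar [SigmaFinite μ]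
    (horth : IsOrthonormalSystem μ ψ) (hψ : ∀ k, AEStronglyMeasurable (ψ k) μ) :
    Integrable (prodMulDetStar ψ) (Measure.pi fun _ ↦ μ) := by
  rw [funext (prodMulDetStar_eq_sum_perm ψ)]
  exact integrable_finsetSum _ fun σ _ ↦ (Integrable.fintype_prod fun k ↦
    horth.integrable_mul_star hψ k (σ k)).const_mul _

theorem IsOrthonormalSystem.integral_prodMulDetStar [SigmaFinite μ]
    (horth : IsOrthonormalSystem μ ψ) (hψ : ∀ k, AEStronglyMeasurable (ψ k) μ) :
    ∫ y, prodMulDetStar ψ y ∂(Measure.pi fun _ ↦ μ) = 1 := by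
  have hperm : ∀ σ : Equiv.Perm n,
      ∫ y, ∏ k, ψ k (y k) * star (ψ (σ k) (y k)) ∂(Measure.pi fun _ ↦ μ) =
        if σ = 1 then 1 else 0 := by
    intro σ
    rw [integral_fintype_prod_eq_prod (fun k x ↦ ψ k x * star (ψ (σ k) x))]
    simp only [fun k ↦ horth k (σ k), Finset.prod_boole, Finset.mem_univ, true_implies]
    simp [Equiv.Perm.ext_iff, eq_comm]
  simp_rw [prodMulDetStar_eq_sum_perm ψ]
  rw [integral_finsetSum _ fun σ _ ↦ (Integrable.fintype_prod fun k ↦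
    horth.integrable_mul_star hψ k (σ k)).const_mul _]
  simp only [integral_const_mul, hperm, mul_ite, mul_one, mul_zero, Finset.sum_ite_eq',
    Finset.mem_univ, if_true, Equiv.Perm.sign_one, Units.val_one, Int.cast_one]

variable {ι : Type*} [Fintype ι] [IsProbabilityMeasure μ]

theorem IsOrthonormalSystem.integrable_prodMulDetStar_comp (horth : IsOrthonormalSystem μ ψ)
    (hψ : ∀ k, AEStronglyMeasurable (ψ k) μ) (r : n → ι) :
    Integrable (fun x : ι → Ω ↦ prodMulDetStar ψ fun k ↦ x (r k)) (Measure.pi fun _ ↦ μ) := by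
  by_cases hr : Function.Injective r
  · have hΦ := horth.integrable_prodMulDetStar hψ
    exact ((measurePreserving_pi_comp_injective μ hr).integrable_comp
      hΦ.aestronglyMeasurable).2 hΦ
  · simpa only [prodMulDetStar_comp_eq_zero ψ hr] using integrable_const 0

theorem IsOrthonormalSystem.integral_prodMulDetStar_comp [DecidableEq ι]
    (horth : IsOrthonormalSystem μ ψ) (hψ : ∀ k, AEStronglyMeasurable (ψ k) μ) (r : n → ι) :
    ∫ x : ι → Ω, prodMulDetStar ψ (fun k ↦ x (r k)) ∂(Measure.pi fun _ ↦ μ) =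
      if Function.Injective r then 1 else 0 := by
  split_ifs with hr
  · have hpres := measurePreserving_pi_comp_injective μ hr
    have hΦ := (horth.integrable_prodMulDetStar hψ).aestronglyMeasurable
    rw [← hpres.map_eq] at hΦ
    rw [← integral_map hpres.measurable.aemeasurable hΦ, hpres.map_eq,
      horth.integral_prodMulDetStar hψ]
  · simp only [prodMulDetStar_comp_eq_zero ψ hr, integral_zero]

theorem IsOrthonormalSystem.integrable_det_sum_vecMulVec_star (horth : IsOrthonormalSystem μ ψ)
    (hψ : ∀ k, AEStronglyMeasurable (ψ k) μ) :
    Integrable (fun x : ι → Ω ↦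
      (∑ i, vecMulVec (fun k ↦ ψ k (x i)) (fun l ↦ star (ψ l (x i)))).det)
      (Measure.pi fun _ ↦ μ) := by
  simp only [det_sum_vecMulVec_star]
  exact integrable_finsetSum _ fun r _ ↦ horth.integrable_prodMulDetStar_comp hψ r

theorem IsOrthonormalSystem.integral_det_sum_vecMulVec_star (horth : IsOrthonormalSystem μ ψ)
    (hψ : ∀ k, AEStronglyMeasurable (ψ k) μ) :
    ∫ x : ι → Ω, (∑ i, vecMulVec (fun k ↦ ψ k (x i)) (fun l ↦ star (ψ l (x i)))).det
      ∂(Measure.pi fun _ ↦ μ) = (Fintype.card ι).descFactorial (Fintype.card n) := by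
  classical
  simp only [det_sum_vecMulVec_star]
  rw [integral_finsetSum _ fun r _ ↦ horth.integrable_prodMulDetStar_comp hψ r]
  simp only [horth.integral_prodMulDetStar_comp hψ, Finset.sum_boole, ← Fintype.card_subtype,
    Fintype.card_congr (Equiv.subtypeInjectiveEquivEmbedding n ι), Fintype.card_embedding_eq]

end Orthonormal

/-- For an orthonormal system w.r.t. a probability measure, the determinant of the
rescaled empirical Gramian can be made `≥ 1 - ε` by a suitable choice of points. -/
theorem stmt_1 {Ω : Type*} [MeasurableSpace Ω] (μ : Measure Ω) [IsProbabilityMeasure μ]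
    (m : ℕ) (ψ : Fin m → Ω → ℂ)
    (hmeas : ∀ k, Measurable (ψ k))
    (horth : ∀ k l, ∫ x, ψ k x * star (ψ l x) ∂μ = if k = l then 1 else 0)
    (ε : ℝ) (hε : 0 < ε) :
    ∃ (M : ℕ) (x : Fin M → Ω),
      1 - ε ≤
        (Matrix.det ((M : ℂ)⁻¹ •
          ∑ i : Fin M, Matrix.vecMulVec (fun k => ψ k (x i)) (fun l => star (ψ l (x i))))).re := by
  obtain ⟨M, hM⟩ : ∃ M : ℕ, 1 - ε < (M.descFactorial m : ℝ) / (M : ℝ) ^ m :=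
    ((tendsto_descFactorial_div_pow_atTop m).eventually (lt_mem_nhds (by linarith))).exists
  replace horth : IsOrthonormalSystem μ ψ := horth
  have hψ k : AEStronglyMeasurable (ψ k) μ := (hmeas k).aestronglyMeasurable
  have hint := (horth.integrable_det_sum_vecMulVec_star (ι := Fin M) hψ).const_mul
    ((M : ℂ)⁻¹ ^ m)
  obtain ⟨x, hx⟩ := exists_integral_le hint.re
  rw [integral_re hint, integral_const_mul, horth.integral_det_sum_vecMulVec_star hψ] at hx
  have hmean : ((M : ℂ)⁻¹ ^ m * (M.descFactorial m : ℂ)).re =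
      (M.descFactorial m : ℝ) / M ^ m := by
    rw [div_eq_inv_mul, ← inv_pow, ← Complex.ofReal_re ((M : ℝ)⁻¹ ^ m * M.descFactorial m)]
    push_cast
    rfl
  simp only [RCLike.re_to_complex, Fintype.card_fin, hmean] at hx
  refine ⟨M, x, hM.le.trans ?_⟩
  rwa [det_smul, Fintype.card_fin]
end

section
/- Let Ω be a compact topological space, μ a Borel probability measure on Ω, and φ₁,…,φₙ : Ω → ℂ continuous functions that are orthonormal in L₂(μ). Then there exist N ≤ n² points x₁,…,x_{N+1} ∈ Ω and nonnegative weights μ₁,…,μ_{N+1} summing to 1 such that ∑_{i=1}^{N+1} μ_i φ_k(x_i) conj(φ_l(x_i)) = δ_{k,l} for all 1 ≤ k,l ≤ n. -/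
/-!
The matrices `M a = (φ_k a * conj (φ_l a))_{k,l}` are Hermitian, and on Hermitian matrices the
real-linear map taking each entry `z` to `z.re + z.im` is injective, so it suffices to realise the
integral of the `ℝ^(n×n)`-valued function `a ↦ (re + im) (M a)` as a convex combination of its
values. That integral lies in the closed convex hull of the range; by Carathéodory the convex hull
of a compact set in dimension `d` is the continuous image of `stdSimplex × (points)^(d+1)`, hence
compact, and every point of it is a convex combination of `d + 1 = n² + 1` values.
-/

open MeasureTheory Module Set

theorem exists_stdSimplex_sum_smul_eq_of_mem_convexHull_range {α E : Type*} [AddCommGroup E]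
    [Module ℝ E] [FiniteDimensional ℝ E] {f : α → E} {y : E}
    (hy : y ∈ convexHull ℝ (range f)) :
    ∃ w ∈ stdSimplex ℝ (Fin (finrank ℝ E + 1)), ∃ x : Fin (finrank ℝ E + 1) → α,
      ∑ i, w i • f (x i) = y := by
  classical
  obtain ⟨ι, _, z, c, hz, hind, hc, hsum, rfl⟩ := eq_pos_convex_span_of_mem_convexHull hy
  choose p hp using fun i => hz (mem_range_self i)
  obtain ⟨i₀⟩ : Nonempty ι := by
    by_contra h
    simp [not_nonempty_iff.mp h] at hsum
  obtain ⟨e⟩ : Nonempty (ι ↪ Fin (finrank ℝ E + 1)) :=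
    Function.Embedding.nonempty_of_card_le <| by
      simpa using hind.card_le_finrank_succ.trans
        (Nat.succ_le_succ (Submodule.finrank_le (vectorSpan ℝ (range z))))
  have hw : ∀ j ∉ range e, Function.extend e c 0 j = 0 := fun j hj =>
    Function.extend_apply' _ _ _ fun ⟨i, hi⟩ => hj ⟨i, hi⟩
  refine ⟨Function.extend e c 0, ⟨fun j => ?_, ?_⟩, Function.extend e p fun _ => p i₀, ?_⟩
  · by_cases hj : j ∈ range e
    · obtain ⟨i, rfl⟩ := hj
      simpa [e.injective.extend_apply] using (hc i).le
    · exact (hw j hj).ge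
  · rw [← hsum]
    exact (Fintype.sum_of_injective e e.injective _ _ hw
      fun i => (e.injective.extend_apply ..).symm).symm
  · refine (Fintype.sum_of_injective e e.injective _ _ (fun j hj => by simp [hw j hj])
      fun i => ?_).symm
    simp [e.injective.extend_apply, hp]

theorem IsCompact.isCompact_convexHull {E : Type*} [TopologicalSpace E] [AddCommGroup E]
    [Module ℝ E] [ContinuousAdd E] [ContinuousSMul ℝ E] [FiniteDimensional ℝ E] {s : Set E}
    (hs : IsCompact s) : IsCompact (convexHull ℝ s) := by
  have : CompactSpace s := isCompact_iff_compactSpace.mp hs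
  have hhull : convexHull ℝ s =
      (fun p : (Fin (finrank ℝ E + 1) → ℝ) × (Fin (finrank ℝ E + 1) → s) =>
        ∑ i, p.1 i • (p.2 i : E)) '' (stdSimplex ℝ _ ×ˢ univ) := by
    refine Subset.antisymm (fun y hy => ?_) ?_
    · rw [← Subtype.range_coe (s := s)] at hy
      obtain ⟨w, hw, x, rfl⟩ := exists_stdSimplex_sum_smul_eq_of_mem_convexHull_range hy
      exact ⟨(w, x), ⟨hw, trivial⟩, rfl⟩
    · rintro _ ⟨⟨w, x⟩, ⟨hw, -⟩, rfl⟩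
      exact (convex_convexHull ℝ s).sum_mem (fun i _ => hw.1 i) hw.2
        fun i _ => subset_convexHull ℝ s (x i).2
  rw [hhull]
  exact ((isCompact_stdSimplex ℝ _).prod isCompact_univ).image (by fun_prop)

theorem exists_stdSimplex_sum_smul_eq_integral {Ω E : Type*} [TopologicalSpace Ω]
    [CompactSpace Ω] [MeasurableSpace Ω] [OpensMeasurableSpace Ω] [NormedAddCommGroup E]
    [NormedSpace ℝ E] [FiniteDimensional ℝ E] (μ : Measure Ω) [IsProbabilityMeasure μ]
    {f : Ω → E} (hf : Continuous f) :
    ∃ w ∈ stdSimplex ℝ (Fin (finrank ℝ E + 1)), ∃ x : Fin (finrank ℝ E + 1) → Ω,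
      ∑ i, w i • f (x i) = ∫ a, f a ∂μ :=
  have : CompleteSpace E := FiniteDimensional.complete ℝ E
  exists_stdSimplex_sum_smul_eq_of_mem_convexHull_range <|
    (convex_convexHull ℝ _).integral_mem (isCompact_range hf).isCompact_convexHull.isClosed
      (ae_of_all _ fun a => subset_convexHull ℝ _ (mem_range_self a))
      (hf.integrable_of_hasCompactSupport (.of_compactSpace f))

theorem eq_of_hermitian_of_re_add_im_eq {ι : Type*} {A B : ι → ι → ℂ}
    (hA : ∀ k l, A l k = star (A k l)) (hB : ∀ k l, B l k = star (B k l))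
    (h : ∀ k l, (A k l).re + (A k l).im = (B k l).re + (B k l).im) (k l : ι) :
    A k l = B k l := by
  have hlk := h l k
  simp only [hA k l, hB k l, Complex.star_def, Complex.conj_re, Complex.conj_im] at hlk
  apply Complex.ext <;> linarith [h k l]

/-- Continuous functions orthonormal w.r.t. a Borel probability measure on a compact
space remain orthonormal w.r.t. a discrete probability measure with at most `N+1 ≤ n²+1`
atoms. -/
theorem stmt_9 {Ω : Type*} [TopologicalSpace Ω] [CompactSpace Ω]
    [MeasurableSpace Ω] [BorelSpace Ω]
    (μ : Measure Ω) [IsProbabilityMeasure μ]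
    (n : ℕ) (φ : Fin n → Ω → ℂ) (hcont : ∀ k, Continuous (φ k))
    (horth : ∀ k l, ∫ x, φ k x * star (φ l x) ∂μ = if k = l then 1 else 0) :
    ∃ N ≤ n ^ 2, ∃ (x : Fin (N + 1) → Ω) (w : Fin (N + 1) → ℝ),
      (∀ i, 0 ≤ w i) ∧ (∑ i, w i = 1) ∧
      ∀ k l, ∑ i, (w i : ℂ) * (φ k (x i) * star (φ l (x i)))
        = if k = l then 1 else 0 := by
  let L : ℂ →L[ℝ] ℝ := Complex.reCLM + Complex.imCLM
  let F : Ω → Fin n × Fin n → ℝ := fun a p => L (φ p.1 a * star (φ p.2 a))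
  have hM : ∀ k l, Continuous fun a => φ k a * star (φ l a) := fun k l =>
    (hcont k).mul (hcont l).star
  have hF : ∀ p, Continuous fun a => F a p := fun p => L.continuous.comp (hM p.1 p.2)
  obtain ⟨w, hw, x, hx⟩ := exists_stdSimplex_sum_smul_eq_integral μ (continuous_pi hF)
  have hrank : finrank ℝ (Fin n × Fin n → ℝ) = n ^ 2 := by simp [sq]
  refine ⟨_, hrank.le, x, w, hw.1, hw.2,
    eq_of_hermitian_of_re_add_im_eq (fun k l => ?_) (fun k l => ?_) fun k l => ?_⟩
  · simp [star_sum, mul_comm]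
  · by_cases h : k = l <;> simp [h, eq_comm]
  · calc _ = L (∑ i, w i • (φ k (x i) * star (φ l (x i)))) := by
          simp only [L, add_apply, Complex.reCLM_apply, Complex.imCLM_apply,
            Complex.real_smul]
      _ = (∑ i, w i • F (x i)) (k, l) := by
          simp only [map_sum, map_smul, Finset.sum_apply, Pi.smul_apply, F]
      _ = L (∫ a, φ k a * star (φ l a) ∂μ) := by
          rw [hx,
            eval_integral fun p => (hF p).integrable_of_hasCompactSupport (.of_compactSpace _),
            L.integral_comp_comm ((hM k l).integrable_of_hasCompactSupport (.of_compactSpace _))]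
      _ = _ := by
          rw [horth]
          simp [L]
end
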